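/- arXiv:1211.5251 — 5 statements merged into one kernel-verified Lean document; each statement's English description precedes it below -/
import Mathlib

section
/- Let a = (a₁,...,a_l) and b = (b₁,...,b_l) be elements of G = Z2^k1 × Z4^k2 × Q8^k3 (with l = k1+k2+k3 coordinates). For each coordinate i at which the commutator (a,b) is non-trivial, one has (a_i, b_i) = a_i² = b_i². In particular the Hamming weight of Φ((a,b)) is at most the Hamming weight of Φ(a²). -/
/-- `Q8` is the quaternion group of order 8. -/
abbrev Q8 := QuaternionGroup 2

/-- The Gray map of `Q8`: `1 ↦ 0000`, `a ↦ 0101`, `a² ↦ 1111`, `a³ ↦ 1010`,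
`b ↦ 0110`, `ab ↦ 1100`, `a²b ↦ 1001`, `a³b ↦ 0011`.
(In `QuaternionGroup 2` one has `aᵏ·b = xa (-k)`.) -/
def grayQ : Q8 → Fin 4 → ZMod 2
  | .a i => ![![0,0,0,0], ![0,1,0,1], ![1,1,1,1], ![1,0,1,0]] i
  | .xa i => ![![0,1,1,0], ![0,0,1,1], ![1,0,0,1], ![1,1,0,0]] i
/-- The ambient group `Z2^k1 × Z4^k2 × Q8^k3` (written multiplicatively). -/
abbrev Amb (k1 k2 k3 : ℕ) :=
  (Fin k1 → Multiplicative (ZMod 2)) × (Fin k2 → Multiplicative (ZMod 4)) × (Fin k3 → Q8)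

/-- The binary space `Z2^(k1+2k2+4k3)` presented in blocks. -/
abbrev BinSp (k1 k2 k3 : ℕ) :=
  (Fin k1 → ZMod 2) × (Fin k2 → Fin 2 → ZMod 2) × (Fin k3 → Fin 4 → ZMod 2)

/-- The Gray map of `Z4`: `0 ↦ 00`, `1 ↦ 01`, `2 ↦ 11`, `3 ↦ 10`. -/
def grayZ4 (y : Multiplicative (ZMod 4)) : Fin 2 → ZMod 2 :=
  ![![0,0], ![0,1], ![1,1], ![1,0]] (Multiplicative.toAdd y)

/-- The generalized Gray map `Φ`. -/
def Phi {k1 k2 k3 : ℕ} (g : Amb k1 k2 k3) : BinSp k1 k2 k3 :=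
  (fun i => Multiplicative.toAdd (g.1 i), fun i => grayZ4 (g.2.1 i), fun i => grayQ (g.2.2 i))

/-- Hamming weight on the binary space. -/
def wtB {k1 k2 k3 : ℕ} (v : BinSp k1 k2 k3) : ℕ :=
  (Finset.univ.filter fun i => v.1 i ≠ 0).card
    + ∑ i, (Finset.univ.filter fun j => v.2.1 i j ≠ 0).card
    + ∑ i, (Finset.univ.filter fun j => v.2.2 i j ≠ 0).card

lemma q8_comm_eq (x y : Q8) (h : x⁻¹ * y⁻¹ * x * y ≠ 1) :
    x⁻¹ * y⁻¹ * x * y = x ^ 2 ∧ x⁻¹ * y⁻¹ * x * y = y ^ 2 := by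
  revert h; revert x y; decide

lemma q8_wt_le (x y : Q8) :
    (Finset.univ.filter fun j => grayQ (x⁻¹ * y⁻¹ * x * y) j ≠ 0).card ≤
    (Finset.univ.filter fun j => grayQ (x ^ 2) j ≠ 0).card := by
  revert x y; decide

/-- At each coordinate where the commutator `(a,b)` is nontrivial (necessarily a
`Q8`-coordinate, the other blocks being abelian), `(aᵢ,bᵢ) = aᵢ² = bᵢ²`; in
particular `w(Φ((a,b))) ≤ w(Φ(a²))`. -/
theorem commutator_coords_eq_squares (k1 k2 k3 : ℕ) (a b : Amb k1 k2 k3) :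
    (∀ i : Fin k3,
        (a.2.2 i)⁻¹ * (b.2.2 i)⁻¹ * a.2.2 i * b.2.2 i ≠ 1 →
        (a.2.2 i)⁻¹ * (b.2.2 i)⁻¹ * a.2.2 i * b.2.2 i = a.2.2 i ^ 2 ∧
        (a.2.2 i)⁻¹ * (b.2.2 i)⁻¹ * a.2.2 i * b.2.2 i = b.2.2 i ^ 2) ∧
    wtB (Phi (a⁻¹ * b⁻¹ * a * b)) ≤ wtB (Phi (a ^ 2)) := by
  refine ⟨fun i h => q8_comm_eq _ _ h, ?_⟩
  have h1 : (Finset.univ.filter fun i => (Phi (a⁻¹ * b⁻¹ * a * b)).1 i ≠ 0).card = 0 := by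
    rw [Finset.card_eq_zero, Finset.filter_eq_empty_iff]
    intro i _
    simp only [Phi, Prod.fst_mul, Prod.fst_inv, Pi.mul_apply, Pi.inv_apply, toAdd_mul, toAdd_inv,
      ne_eq, not_not]
    abel
  have h2 : ∀ i : Fin k2, (Finset.univ.filter fun j => (Phi (a⁻¹ * b⁻¹ * a * b)).2.1 i j ≠ 0).card = 0 := by
    intro i
    rw [Finset.card_eq_zero, Finset.filter_eq_empty_iff]
    intro j _
    have hz : (a⁻¹ * b⁻¹ * a * b).2.1 i = 1 := by
      simp only [Prod.snd_mul, Prod.snd_inv, Prod.fst_mul, Prod.fst_inv, Pi.mul_apply, Pi.inv_apply]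
      rw [mul_assoc, mul_mul_mul_comm]
      simp
    simp only [Phi, hz, not_not]
    have : grayZ4 1 = ![0,0] := rfl
    rw [this]
    fin_cases j <;> rfl
  unfold wtB
  rw [h1]
  simp only [Finset.sum_congr rfl (fun i _ => h2 i), Finset.sum_const_zero]
  simp only [zero_add, add_zero]
  calc ∑ i, (Finset.univ.filter fun j => (Phi (a⁻¹ * b⁻¹ * a * b)).2.2 i j ≠ 0).card
      ≤ ∑ i, (Finset.univ.filter fun j => (Phi (a ^ 2)).2.2 i j ≠ 0).card := by
        apply Finset.sum_le_sum
        intro i _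
        exact q8_wt_le (a.2.2 i) (b.2.2 i)
    _ ≤ _ := Nat.le_add_left _ _
end

section
/- Let C be a binary code of length n containing the zero vector, with kernel K(C) = {z ∈ Z2^n : C + z = C}. If C is not linear (not closed under addition), then the rank r of C (dimension of the linear span of C) satisfies r ≥ k + 2, where k is the dimension of K(C). -/
/-- If a binary code `C ⊆ Z2^n` containing `0` is not linear, then its rank `r`
(the dimension of its linear span) and the dimension `k` of its kernel
`K(C) = {z : C + z = C}` satisfy `r ≥ k + 2`. -/
theorem rank_ge_kernel_add_two (n : ℕ) (C : Set (Fin n → ZMod 2))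
    (h0 : (0 : Fin n → ZMod 2) ∈ C)
    (hnl : ¬ ∀ u ∈ C, ∀ v ∈ C, u + v ∈ C) :
    Module.finrank (ZMod 2)
        ↥(Submodule.span (ZMod 2) {z : Fin n → ZMod 2 | (· + z) '' C = C}) + 2 ≤
      Module.finrank (ZMod 2) ↥(Submodule.span (ZMod 2) C) := by
  push_neg at hnl
  obtain ⟨u, hu, v, hv, huv⟩ := hnl
  have hcases : ∀ c : ZMod 2, c = 0 ∨ c = 1 := by decide
  -- the kernel as a submodule
  set K : Submodule (ZMod 2) (Fin n → ZMod 2) :=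
    { carrier := {z : Fin n → ZMod 2 | (· + z) '' C = C}
      zero_mem' := by simp
      add_mem' := by
        intro z₁ z₂ h1 h2
        have key : (· + (z₁ + z₂)) '' C = (· + z₂) '' ((· + z₁) '' C) := by
          rw [Set.image_image]
          exact Set.image_congr fun x _ => (add_assoc x z₁ z₂).symm
        simp only [Set.mem_setOf_eq] at h1 h2 ⊢
        rw [key, h1, h2]
      smul_mem' := by
        intro c z hz
        rcases hcases c with rfl | rfl
        · simpa using (by simp : (· + (0 : Fin n → ZMod 2)) '' C = C)
        · simpa using hz } with hK
  have hKmem : ∀ z, z ∈ K ↔ (· + z) '' C = C := fun z => Iff.rfl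
  have hKC : ∀ z ∈ K, z ∈ C := by
    intro z hz
    have : (0 : Fin n → ZMod 2) + z ∈ (· + z) '' C := ⟨0, h0, rfl⟩
    rw [(hKmem z).mp hz] at this
    simpa using this
  have huK : u ∉ K := by
    intro h
    have : v + u ∈ (· + u) '' C := ⟨v, hv, rfl⟩
    rw [(hKmem u).mp h] at this
    exact huv (by rwa [add_comm] at this)
  have huvK : u + v ∉ K := fun h => huv (hKC _ h)
  have hspan : Submodule.span (ZMod 2) {z : Fin n → ZMod 2 | (· + z) '' C = C} = K :=
    K.span_eq
  rw [hspan]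
  set W1 : Submodule (ZMod 2) (Fin n → ZMod 2) := K ⊔ Submodule.span (ZMod 2) {u} with hW1
  set W2 : Submodule (ZMod 2) (Fin n → ZMod 2) := W1 ⊔ Submodule.span (ZMod 2) {v} with hW2
  have hlt1 : K < W1 := by
    refine lt_of_le_of_ne le_sup_left fun h => huK ?_
    rw [h]
    exact Submodule.mem_sup_right (Submodule.mem_span_singleton_self u)
  have hvW1 : v ∉ W1 := by
    intro h
    rw [hW1, Submodule.mem_sup] at h
    obtain ⟨k, hk, z, hz, hzv⟩ := h
    rw [Submodule.mem_span_singleton] at hz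
    obtain ⟨c, rfl⟩ := hz
    rcases hcases c with rfl | rfl
    · simp only [zero_smul, add_zero] at hzv
      subst hzv
      have : u + k ∈ (· + k) '' C := ⟨u, hu, rfl⟩
      rw [(hKmem k).mp hk] at this
      exact huv this
    · simp only [one_smul] at hzv
      apply huvK
      have huu : u + u = 0 := by
        funext i
        exact CharTwo.add_self_eq_zero (u i)
      have heq : u + v = k := by
        rw [← hzv, show u + (k + u) = k + (u + u) from by abel, huu, add_zero]
      rwa [heq]
  have hlt2 : W1 < W2 := by
    refine lt_of_le_of_ne le_sup_left fun h => hvW1 ?_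
    rw [h]
    exact Submodule.mem_sup_right (Submodule.mem_span_singleton_self v)
  have hle : W2 ≤ Submodule.span (ZMod 2) C := by
    refine sup_le (sup_le ?_ ?_) ?_
    · intro z hz
      exact Submodule.subset_span (hKC z hz)
    · exact Submodule.span_le.mpr (by simpa using Submodule.subset_span hu)
    · exact Submodule.span_le.mpr (by simpa using Submodule.subset_span hv)
  have f1 : Module.finrank (ZMod 2) K < Module.finrank (ZMod 2) W1 :=
    Submodule.finrank_lt_finrank_of_lt hlt1
  have f2 : Module.finrank (ZMod 2) W1 < Module.finrank (ZMod 2) W2 :=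
    Submodule.finrank_lt_finrank_of_lt hlt2
  have f3 : Module.finrank (ZMod 2) W2 ≤
      Module.finrank (ZMod 2) (Submodule.span (ZMod 2) C) :=
    Submodule.finrank_mono hle
  omega
end

section
/- Let C be a binary code of length n containing 0 whose cardinality is a power of 2, with kernel K(C). If C is not linear then |C| ≥ 4·|K(C)| and the rank of C satisfies r ≥ k + 3, where k = dim K(C). -/
/-- If a binary code `C ⊆ Z2^n` contains `0`, has cardinality a power of `2`
and is not linear, then `|C| ≥ 4·|K(C)|` and `r ≥ k + 3`, where `r` is the rank
of `C` and `k` the dimension of its kernel `K(C) = {z : C + z = C}`. -/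
theorem rank_ge_kernel_add_three (n : ℕ) (C : Set (Fin n → ZMod 2))
    (h0 : (0 : Fin n → ZMod 2) ∈ C)
    (hpow : ∃ m : ℕ, C.ncard = 2 ^ m)
    (hnl : ¬ ∀ u ∈ C, ∀ v ∈ C, u + v ∈ C) :
    4 * {z : Fin n → ZMod 2 | (· + z) '' C = C}.ncard ≤ C.ncard ∧
    Module.finrank (ZMod 2)
        ↥(Submodule.span (ZMod 2) {z : Fin n → ZMod 2 | (· + z) '' C = C}) + 3 ≤
      Module.finrank (ZMod 2) ↥(Submodule.span (ZMod 2) C) := by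
  classical
  obtain ⟨m, hm⟩ := hpow
  set K : Set (Fin n → ZMod 2) := {z | (· + z) '' C = C} with hKdef
  have hself : ∀ x : Fin n → ZMod 2, x + x = 0 := fun x =>
    funext fun i => CharTwo.add_self_eq_zero _
  have hK0 : (0 : Fin n → ZMod 2) ∈ K := by
    simp [hKdef]
  have hKadd : ∀ z ∈ K, ∀ w ∈ K, z + w ∈ K := by
    intro z hz w hw
    simp only [hKdef, Set.mem_setOf_eq] at hz hw ⊢
    have : (· + (z + w)) '' C = (· + w) '' ((· + z) '' C) := by
      rw [Set.image_image]
      apply Set.image_congr'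
      intro x
      rw [add_assoc]
    rw [this, hz, hw]
  have hKC : K ⊆ C := by
    intro z hz
    have hz' : (· + z) '' C = C := hz
    have : z ∈ (· + z) '' C := ⟨0, h0, zero_add z⟩
    rwa [hz'] at this
  have hKtrans : ∀ z ∈ K, ∀ x ∈ C, x + z ∈ C := by
    intro z hz x hx
    have hz' : (· + z) '' C = C := hz
    rw [← hz']
    exact ⟨x, hx, rfl⟩
  -- K as a submodule
  have hc01 : ∀ c : ZMod 2, c = 0 ∨ c = 1 := by decide
  set Kmod : Submodule (ZMod 2) (Fin n → ZMod 2) :=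
    { carrier := K
      add_mem' := fun {a b} ha hb => hKadd a ha b hb
      zero_mem' := hK0
      smul_mem' := by
        intro c x hx
        rcases hc01 c with rfl | rfl
        · simpa using hK0
        · simpa using hx } with hKmod
  have hKcoe : (Kmod : Set (Fin n → ZMod 2)) = K := rfl
  have hspanK : Submodule.span (ZMod 2) K = Kmod := by
    rw [← hKcoe, Submodule.span_eq]
  set k := Module.finrank (ZMod 2) ↥Kmod with hk
  set S := Submodule.span (ZMod 2) C with hS
  set r := Module.finrank (ZMod 2) ↥S with hr
  haveI : Finite (Fin n → ZMod 2) := inferInstance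
  have hCfin : C.Finite := Set.toFinite C
  have hKfin : K.Finite := Set.toFinite K
  -- |K| = 2^k
  have hKcard : K.ncard = 2 ^ k := by
    have := Module.card_eq_pow_finrank (K := ZMod 2) (V := ↥Kmod)
    rw [ZMod.card] at this
    rw [← Nat.card_coe_set_eq, ← hKcoe]
    rw [Nat.card_eq_fintype_card]
    exact this
  -- |S| = 2^r
  have hScard : Nat.card ↥S = 2 ^ r := by
    have := Module.card_eq_pow_finrank (K := ZMod 2) (V := ↥S)
    rw [ZMod.card] at this
    rw [Nat.card_eq_fintype_card]
    exact this
  -- C ⊂ S strictly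
  have hCsubS : C ⊆ (S : Set (Fin n → ZMod 2)) := Submodule.subset_span
  have hCneS : C ≠ (S : Set (Fin n → ZMod 2)) := by
    intro h
    apply hnl
    intro u hu v hv
    have : u + v ∈ S := S.add_mem (by rw [h] at hu; exact hu) (by rw [h] at hv; exact hv)
    rw [h]
    exact this
  have hClt : C.ncard < 2 ^ r := by
    have h1 : C.ncard < (S : Set (Fin n → ZMod 2)).ncard :=
      Set.ncard_lt_ncard (ssubset_of_subset_of_ne hCsubS hCneS) (Set.toFinite _)
    have h2 : (S : Set (Fin n → ZMod 2)).ncard = 2 ^ r := by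
      rw [← Nat.card_coe_set_eq]; exact hScard
    rwa [h2] at h1
  -- main combinatorial step: k + 2 ≤ m
  have hkm : 2 ^ k ≤ 2 ^ m := by
    rw [← hKcard, ← hm]
    exact Set.ncard_le_ncard hKC hCfin
  have hkm' : k ≤ m := (pow_le_pow_iff_right₀ one_lt_two).mp hkm
  have hmain : k + 2 ≤ m := by
    by_contra hlt
    push_neg at hlt
    have hcases : m = k ∨ m = k + 1 := by omega
    rcases hcases with rfl | rfl
    · -- m = k : C = K, so C is linear
      have hCK : K = C := Set.eq_of_subset_of_ncard_le hKC (by rw [hKcard, hm]) hCfin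
      exact hnl fun u hu v hv => by
        rw [← hCK] at hu hv ⊢; exact hKadd u hu v hv
    · -- m = k+1 : C = K ∪ (a + K), linear
      have hKltC : K.ncard < C.ncard := by rw [hKcard, hm]; exact Nat.pow_lt_pow_right one_lt_two (Nat.lt_succ_self k)
      have hKne : K ≠ C := fun h => by rw [h] at hKltC; omega
      obtain ⟨a, haC, haK⟩ := Set.exists_of_ssubset (ssubset_of_subset_of_ne hKC hKne)
      set T : Set (Fin n → ZMod 2) := (a + ·) '' K with hT
      have hTC : T ⊆ C := by
        rintro _ ⟨z, hz, rfl⟩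
        exact hKtrans z hz a haC
      have hdisj : Disjoint K T := by
        rw [Set.disjoint_left]
        rintro x hxK ⟨z, hz, rfl⟩
        apply haK
        have : a + z + z ∈ K := hKadd _ hxK z hz
        rwa [add_assoc, hself z, add_zero] at this
      have hTcard : T.ncard = K.ncard := by
        apply Set.ncard_image_of_injective
        exact fun x y h => by simpa using add_left_cancel h
      have hunion : (K ∪ T).ncard = 2 ^ (k + 1) := by
        rw [Set.ncard_union_eq hdisj hKfin (hKfin.image _), hTcard, hKcard]
        ring
      have hUC : K ∪ T = C := by
        apply Set.eq_of_subset_of_ncard_le (Set.union_subset hKC hTC)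
          (by rw [hunion, hm]) hCfin
      apply hnl
      intro u hu v hv
      rw [← hUC] at hu hv
      have memC : ∀ w, w ∈ K ∪ T → w ∈ C := by rw [hUC]; exact fun w h => h
      rcases hu with hu | ⟨z, hz, rfl⟩ <;> rcases hv with hv | ⟨w, hw, rfl⟩
      · exact hKC (hKadd u hu v hv)
      · have : a + (w + u) ∈ T := ⟨w + u, hKadd w hw u hu, rfl⟩
        have h2 : u + (a + w) = a + (w + u) := by ring
        rw [h2]; exact hTC this
      · have : a + (z + v) ∈ T := ⟨z + v, hKadd z hz v hv, rfl⟩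
        have h2 : a + z + v = a + (z + v) := by ring
        rw [h2]; exact hTC this
      · have h2 : a + z + (a + w) = (a + a) + (z + w) := by ring
        rw [h2, hself a, zero_add]
        exact hKC (hKadd z hz w hw)
  -- conclude
  have hmr : m < r := by
    have : (2:ℕ) ^ m < 2 ^ r := hm ▸ hClt
    exact (pow_lt_pow_iff_right₀ one_lt_two).mp this
  constructor
  · calc 4 * K.ncard = 2 ^ (k + 2) := by rw [hKcard]; ring
    _ ≤ 2 ^ m := Nat.pow_le_pow_right (by norm_num) hmain
    _ = C.ncard := hm.symm
  · rw [hspanK]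
    omega
end

section
/- Let C be a subgroup of G = Z2^k1 × Z4^k2 × Q8^k3 with |C| ≤ 8 such that C is abelian. Then the binary image Φ(C) under the generalized Gray map is a linear subspace of Z2^n, n = k1 + 2k2 + 4k3. -/
/-! ### Auxiliary definitions for the proof -/

/-- Coordinatewise "AND of squares" correction on the `Q8` part. -/
def muQ (u v : Q8) : Q8 := if u = .a 2 ∧ v = .a 2 then .a 2 else 1

/-- Coordinatewise "AND of squares" correction on the `Z4` part. -/
def muZ (u v : Multiplicative (ZMod 4)) : Multiplicative (ZMod 4) :=
  if u = Multiplicative.ofAdd 2 ∧ v = Multiplicative.ofAdd 2 then Multiplicative.ofAdd 2 else 1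

/-- The correction element: `Φ x + Φ y = Φ (x * y * mu x y)` for commuting `x y`. -/
def mu {k1 k2 k3 : ℕ} (x y : Amb k1 k2 k3) : Amb k1 k2 k3 :=
  (1, fun i => muZ (x.2.1 i * x.2.1 i) (y.2.1 i * y.2.1 i),
      fun i => muQ (x.2.2 i * x.2.2 i) (y.2.2 i * y.2.2 i))

lemma muZ_gray : ∀ u v : Multiplicative (ZMod 4),
    grayZ4 u + grayZ4 v = grayZ4 (u * v * muZ (u*u) (v*v)) := by decide

lemma muQ_gray : ∀ u v : Q8, u * v = v * u →
    grayQ u + grayQ v = grayQ (u * v * muQ (u*u) (v*v)) := by decide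

lemma z2_sq : ∀ t : Multiplicative (ZMod 2), t * t = 1 := by decide
lemma z4_exp4 : ∀ u : Multiplicative (ZMod 4), (u*u)*(u*u) = 1 := by decide
lemma q8_exp4 : ∀ u : Q8, (u*u)*(u*u) = 1 := by decide
lemma muZ_facts : ∀ v : Multiplicative (ZMod 4),
    muZ 1 v = 1 ∧ muZ v 1 = 1 ∧ muZ (v*v) (v*v) = v*v := by decide
lemma muQ_facts : ∀ v : Q8, muQ 1 v = 1 ∧ muQ v 1 = 1 ∧ muQ (v*v) (v*v) = v*v := by decide

lemma amb_exp4 {k1 k2 k3 : ℕ} (x : Amb k1 k2 k3) : (x*x)*(x*x) = 1 := by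
  refine Prod.ext ?_ (Prod.ext ?_ ?_)
  · funext i
    show (x.1 i * x.1 i) * (x.1 i * x.1 i) = 1
    rw [z2_sq (x.1 i), one_mul]
  · funext i; exact z4_exp4 (x.2.1 i)
  · funext i; exact q8_exp4 (x.2.2 i)

lemma gray_add {k1 k2 k3 : ℕ} (x y : Amb k1 k2 k3) (h : x * y = y * x) :
    Phi x + Phi y = Phi (x * y * mu x y) := by
  have h3 : ∀ i, x.2.2 i * y.2.2 i = y.2.2 i * x.2.2 i := fun i =>
    congrArg (fun z : Amb k1 k2 k3 => z.2.2 i) h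
  refine Prod.ext ?_ (Prod.ext ?_ ?_)
  · funext i
    show Multiplicative.toAdd (x.1 i) + Multiplicative.toAdd (y.1 i)
        = Multiplicative.toAdd (x.1 i * y.1 i * 1)
    rw [mul_one, toAdd_mul]
  · funext i; exact muZ_gray (x.2.1 i) (y.2.1 i)
  · funext i; exact muQ_gray (x.2.2 i) (y.2.2 i) (h3 i)

/-- If `|C| ≤ 8`, `C` abelian, then any two nontrivial squares in `C` coincide. -/
lemma squares_eq {k1 k2 k3 : ℕ} (C : Subgroup (Amb k1 k2 k3))
    (hcard : Nat.card C ≤ 8) (hab : ∀ x ∈ C, ∀ y ∈ C, x * y = y * x)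
    {x y : Amb k1 k2 k3} (hx : x ∈ C) (hy : y ∈ C)
    (hx2 : x * x ≠ 1) (hy2 : y * y ≠ 1) : x * x = y * y := by
  by_contra hne
  -- the squaring homomorphism on C
  let sq : C →* C :=
    { toFun := fun c => ⟨c.1 * c.1, mul_mem c.2 c.2⟩
      map_one' := by apply Subtype.ext; exact one_mul 1
      map_mul' := by
        rintro ⟨a, ha⟩ ⟨b, hb⟩
        apply Subtype.ext
        show (a * b) * (a * b) = (a * a) * (b * b)
        have h := hab a ha b hb
        rw [mul_assoc, ← mul_assoc b a b, ← h, mul_assoc, ← mul_assoc]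
      }
  have hrle : sq.range ≤ sq.ker := by
    rintro z ⟨c, rfl⟩
    show sq (sq c) = 1
    apply Subtype.ext
    exact amb_exp4 c.1
  have hcards : Nat.card C = Nat.card sq.range * Nat.card sq.ker := by
    rw [Subgroup.card_eq_card_quotient_mul_card_subgroup sq.ker]
    congr 1
    exact Nat.card_congr (QuotientGroup.quotientKerEquivRange sq).toEquiv
  have hr2 : Nat.card sq.range ≤ 2 := by
    by_contra hgt
    push_neg at hgt
    have h1 : Nat.card sq.range * Nat.card sq.range ≤ Nat.card C := by
      rw [hcards]
      exact Nat.mul_le_mul_left _ (Subgroup.card_le_of_le hrle)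
    have : 3 * 3 ≤ 8 := le_trans (Nat.mul_le_mul hgt hgt) (le_trans h1 hcard)
    omega
  -- but 1, x*x, y*y are three distinct elements of the range
  have h1m : (1 : C) ∈ sq.range := one_mem _
  have hxm : (⟨x * x, mul_mem hx hx⟩ : C) ∈ sq.range := ⟨⟨x, hx⟩, rfl⟩
  have hym : (⟨y * y, mul_mem hy hy⟩ : C) ∈ sq.range := ⟨⟨y, hy⟩, rfl⟩
  let f : Fin 3 → sq.range := ![⟨1, h1m⟩, ⟨_, hxm⟩, ⟨_, hym⟩]
  have hinj : Function.Injective f := by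
    intro i j hij
    have hv := congrArg (fun z : sq.range => (z.1 : Amb k1 k2 k3)) hij
    fin_cases i <;> fin_cases j <;>
      first
      | rfl
      | (exfalso
         simp only [f, Matrix.cons_val_zero, Matrix.cons_val_one, Matrix.head_cons,
           Matrix.cons_val_two, Matrix.tail_cons] at hv
         first
         | exact hx2 hv.symm
         | exact hy2 hv.symm
         | exact hx2 hv
         | exact hy2 hv
         | exact hne hv
         | exact hne hv.symm)
  have h3le : 3 ≤ Nat.card sq.range := by
    have h := Nat.card_le_card_of_injective f hinj
    simpa using h
  omega

lemma mu_mem {k1 k2 k3 : ℕ} (C : Subgroup (Amb k1 k2 k3))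
    (hcard : Nat.card C ≤ 8) (hab : ∀ x ∈ C, ∀ y ∈ C, x * y = y * x)
    {x y : Amb k1 k2 k3} (hx : x ∈ C) (hy : y ∈ C) : mu x y ∈ C := by
  by_cases hx2 : x * x = 1
  · have : mu x y = 1 := by
      refine Prod.ext rfl (Prod.ext ?_ ?_)
      · funext i
        have : x.2.1 i * x.2.1 i = 1 := congrArg (fun z : Amb k1 k2 k3 => z.2.1 i) hx2
        show muZ (x.2.1 i * x.2.1 i) _ = 1
        rw [this]; exact (muZ_facts _).1
      · funext i
        have : x.2.2 i * x.2.2 i = 1 := congrArg (fun z : Amb k1 k2 k3 => z.2.2 i) hx2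
        show muQ (x.2.2 i * x.2.2 i) _ = 1
        rw [this]; exact (muQ_facts _).1
    rw [this]; exact one_mem C
  · by_cases hy2 : y * y = 1
    · have : mu x y = 1 := by
        refine Prod.ext rfl (Prod.ext ?_ ?_)
        · funext i
          have : y.2.1 i * y.2.1 i = 1 := congrArg (fun z : Amb k1 k2 k3 => z.2.1 i) hy2
          show muZ _ (y.2.1 i * y.2.1 i) = 1
          rw [this]; exact (muZ_facts _).2.1
        · funext i
          have : y.2.2 i * y.2.2 i = 1 := congrArg (fun z : Amb k1 k2 k3 => z.2.2 i) hy2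
          show muQ _ (y.2.2 i * y.2.2 i) = 1
          rw [this]; exact (muQ_facts _).2.1
      rw [this]; exact one_mem C
    · have hs := squares_eq C hcard hab hx hy hx2 hy2
      have : mu x y = x * x := by
        refine Prod.ext ?_ (Prod.ext ?_ ?_)
        · funext i
          show (1 : Multiplicative (ZMod 2)) = x.1 i * x.1 i
          rw [z2_sq (x.1 i)]
        · funext i
          have h := (congrArg (fun z : Amb k1 k2 k3 => z.2.1 i) hs).symm
          show muZ (x.2.1 i * x.2.1 i) (y.2.1 i * y.2.1 i) = x.2.1 i * x.2.1 i
          rw [show y.2.1 i * y.2.1 i = x.2.1 i * x.2.1 i from h]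
          exact (muZ_facts _).2.2
        · funext i
          have h := (congrArg (fun z : Amb k1 k2 k3 => z.2.2 i) hs).symm
          show muQ (x.2.2 i * x.2.2 i) (y.2.2 i * y.2.2 i) = x.2.2 i * x.2.2 i
          rw [show y.2.2 i * y.2.2 i = x.2.2 i * x.2.2 i from h]
          exact (muQ_facts _).2.2
      rw [this]; exact mul_mem hx hx

lemma Phi_one {k1 k2 k3 : ℕ} : Phi (1 : Amb k1 k2 k3) = (0 : BinSp k1 k2 k3) := by
  refine Prod.ext rfl (Prod.ext ?_ ?_)
  · funext i; show grayZ4 1 = 0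
    have : grayZ4 1 = fun _ => 0 := by decide
    rw [this]; rfl
  · funext i; show grayQ 1 = 0
    have : grayQ 1 = fun _ => 0 := by decide
    rw [this]; rfl

/-- If `C ≤ Z2^k1 × Z4^k2 × Q8^k3` is abelian with `|C| ≤ 8`, then `Φ(C)` is a
linear subspace of `Z2^n`: it contains `0` and is closed under addition. -/
theorem small_abelian_gray_image_linear {k1 k2 k3 : ℕ} (C : Subgroup (Amb k1 k2 k3))
    (hcard : Nat.card C ≤ 8) (hab : ∀ x ∈ C, ∀ y ∈ C, x * y = y * x) :
    (0 : BinSp k1 k2 k3) ∈ Phi '' (C : Set (Amb k1 k2 k3)) ∧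
    ∀ u ∈ Phi '' (C : Set (Amb k1 k2 k3)), ∀ v ∈ Phi '' (C : Set (Amb k1 k2 k3)),
      u + v ∈ Phi '' (C : Set (Amb k1 k2 k3)) := by
  constructor
  · exact ⟨1, C.one_mem, Phi_one⟩
  · rintro u ⟨x, hx, rfl⟩ v ⟨y, hy, rfl⟩
    refine ⟨x * y * mu x y, mul_mem (mul_mem hx hy) (mu_mem C hcard hab hx hy), ?_⟩
    exact (gray_add x y (hab x hx y hy)).symm
end

section
/- There is no extended perfect binary code of length n ≥ 16 of the form Φ(C) with C a subgroup of Z2^k1 × Z4^k2 × Q8^k3 and k3 ≥ 2 with (k1,k2,k3) ≠ (0,0,2): indeed, for any such parameters with k3 ≥ 2 and k1 + 2k2 + 4(k3−2) ≥ 1, the vector (x | 1,0,0,0 | 1,0,0,0) — with x of weight 1 in the first k1+2k2+4(k3−2) binary coordinates and the two length-4 blocks occupying two Q8-coordinates — is at Hamming distance ≥ 2 from every element of Φ(C). -/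
/-- Hamming distance on the binary space. -/
def hdistB {k1 k2 k3 : ℕ} (u v : BinSp k1 k2 k3) : ℕ := wtB (u - v)

/-- A weight-3 vector whose support meets two distinct `Q8`-blocks in exactly
their first binary position (the remaining weight-1 entry lying outside those
two blocks) is at Hamming distance at least 2 from the Gray image of every
element of `Z2^k1 × Z4^k2 × Q8^k3`; hence no extended perfect code of this form
exists with `k3 ≥ 2` and `(k1,k2,k3) ≠ (0,0,2)`. -/
theorem no_extended_perfect_two_quaternionic_blocks {k1 k2 k3 : ℕ}
    (i j : Fin k3) (hij : i ≠ j) (v : BinSp k1 k2 k3)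
    (hvi : v.2.2 i = ![1, 0, 0, 0]) (hvj : v.2.2 j = ![1, 0, 0, 0])
    (hw : wtB v = 3) :
    ∀ g : Amb k1 k2 k3, 2 ≤ hdistB v (Phi g) := by
  intro g
  have key : ∀ q : Q8, ∃ t : Fin 4, ((![1,0,0,0] : Fin 4 → ZMod 2) - grayQ q) t ≠ 0 := by
    decide
  set f : Fin k3 → ℕ := fun k =>
    (Finset.univ.filter fun t => (v.2.2 k - grayQ (g.2.2 k)) t ≠ 0).card with hf
  have hcard : ∀ k : Fin k3, v.2.2 k = ![1,0,0,0] → 1 ≤ f k := by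
    intro k hk
    obtain ⟨t, ht⟩ := key (g.2.2 k)
    refine Finset.card_pos.mpr ⟨t, Finset.mem_filter.mpr ⟨Finset.mem_univ _, ?_⟩⟩
    rw [hk]; exact ht
  have hsum : 2 ≤ ∑ k, f k := by
    have h2 : f i + f j ≤ ∑ k, f k := by
      rw [← Finset.sum_pair hij]
      exact Finset.sum_le_sum_of_subset (Finset.subset_univ _)
    have fi := hcard i hvi
    have fj := hcard j hvj
    omega
  have : hdistB v (Phi g) =
      (Finset.univ.filter fun t => (v.1 t - Multiplicative.toAdd (g.1 t)) ≠ 0).card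
      + ∑ k, (Finset.univ.filter fun t => (v.2.1 k t - grayZ4 (g.2.1 k) t) ≠ 0).card
      + ∑ k, f k := rfl
  omega
end
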